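/- Let u : [0,∞) → ℝⁿ solve u' = N(u) with N smooth, and let ϑ = 1/3 + O(τ). Then the two-stage scheme u* = u + τN(u)/(3(1−ϑ)) + τ²N_t(u)/(12(1−ϑ)), u⁺ = u + τN(u) + (ϑτ²/2)N_t(u) + ((1−ϑ)τ²/2)N_t(u*) satisfies u⁺ = u(t+τ) + O(τ⁵), i.e. the two-stage method is fourth-order accurate. -/

import Mathlib

open Asymptotics Filter

/-- `N_t(v) = DN(v)·N(v)`, the derivative of `N` along the flow of `u' = N(u)`. -/
noncomputable def flowDeriv {n : ℕ} (N : (Fin n → ℝ) → Fin n → ℝ)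
    (v : Fin n → ℝ) : Fin n → ℝ :=
  fderiv ℝ N v (N v)

/-!
Along the flow, `u(t+τ) = u + τN + τ²/2 N_t + τ³/6 DN_t N + τ⁴/24 (DN_t N_t + D²N_t(N,N)) + O(τ⁵)`:
each `g(u(t+τ))` is expanded in iterated Lie derivatives along `N`, one order at a time, by
integrating the expansion of its derivative. On the scheme side the stage displacement
`u* - u = aN + bN_t` is `τN/2 + O(τ²)`, so the second-order Taylor expansion of `N_t` at `u` gives
`N_t(u*) = N_t + DN_t(aN + bN_t) + ½ D²N_t(τN/2, τN/2) + O(τ³)`. The weights satisfy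
`(1-ϑ)τ²/2 · a = τ³/6` and `(1-ϑ)τ²/2 · b = τ⁴/24`, so every term matches exactly except
`D²N_t(N,N)`, whose coefficient is off by `τ⁴(1-3ϑ)/48 = O(τ⁵)` because `ϑ = 1/3 + O(τ)`.
-/

open Topology Finset Nat

variable {α E F : Type*} [NormedAddCommGroup E] [NormedSpace ℝ E]
  [NormedAddCommGroup F] [NormedSpace ℝ F]

theorem tendsto_nhds_of_isBigO_sub {l : Filter α} {f g : α → ℝ} {c : ℝ}
    (h : (fun x => f x - c) =O[l] g) (hg : Tendsto g l (𝓝 0)) : Tendsto f l (𝓝 c) :=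
  tendsto_sub_nhds_zero_iff.mp (h.trans_tendsto hg)

theorem Asymptotics.IsBigO.smul_const {l : Filter α} {f g : α → ℝ} (h : f =O[l] g) (x : E) :
    (fun a => f a • x) =O[l] g := by
  simpa using h.smul (isBigO_const_one ℝ x l)

theorem ContinuousLinearMap.isBigO_apply₂ (B : E →L[ℝ] E →L[ℝ] F) {l : Filter α}
    {a b : α → E} {fa fb : α → ℝ} (ha : a =O[l] fa) (hb : b =O[l] fb) :
    (fun x => B (a x) (b x)) =O[l] fun x => fa x * fb x := by
  refine B.isBoundedBilinearMap.isBigO_comp.trans ((ha.norm_norm.mul hb.norm_norm).trans ?_)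
  exact (isBigO_refl (fun x => fa x * fb x) l).norm_left.congr_left fun x => norm_mul _ _

theorem isBigO_norm_pow_succ_of_hasFDerivAt {f : E → F} {f' : E → E →L[ℝ] F} {k : ℕ}
    (hf : ∀ w, HasFDerivAt f (f' w) w) (h0 : f 0 = 0)
    (h : f' =O[𝓝 0] fun w => ‖w‖ ^ k) : f =O[𝓝 0] fun w => ‖w‖ ^ (k + 1) := by
  obtain ⟨C, hC0, hC⟩ := h.exists_pos
  obtain ⟨δ, hδ, hball⟩ := Metric.eventually_nhds_iff_ball.mp hC.bound
  refine IsBigO.of_bound C (Metric.eventually_nhds_iff_ball.mpr ⟨δ, hδ, fun w hw => ?_⟩)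
  have hsub : Metric.closedBall (0 : E) ‖w‖ ⊆ Metric.ball 0 δ :=
    Metric.closedBall_subset_ball (by simpa using hw)
  have bound : ∀ y ∈ Metric.closedBall (0 : E) ‖w‖, ‖f' y‖ ≤ C * ‖w‖ ^ k := fun y hy => by
    have hy' : ‖y‖ ≤ ‖w‖ := by simpa using hy
    calc ‖f' y‖ ≤ C * ‖‖y‖ ^ k‖ := hball y (hsub hy)
      _ ≤ C * ‖w‖ ^ k := by rw [norm_pow, norm_norm]; gcongr
  have := (convex_closedBall (0 : E) ‖w‖).norm_image_sub_le_of_norm_hasFDerivWithin_le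
    (fun y _ => (hf y).hasFDerivWithinAt) bound (x := 0) (y := w)
    (Metric.mem_closedBall_self (norm_nonneg w)) (by simp)
  simpa [h0, pow_succ, mul_assoc] using this

theorem isBigO_pow_succ_of_hasDerivAt {f f' : ℝ → F} {k : ℕ}
    (hf : ∀ s, HasDerivAt f (f' s) s) (h0 : f 0 = 0)
    (h : f' =O[𝓝 0] (· ^ k)) : f =O[𝓝 0] (· ^ (k + 1)) := by
  have h' : (fun s => (1 : ℝ →L[ℝ] ℝ).smulRight (f' s)) =O[𝓝 0] fun s => ‖s‖ ^ k := by
    refine IsBigO.of_norm_left ?_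
    simpa [ContinuousLinearMap.norm_smulRight_apply, norm_pow] using h.norm_left.norm_right
  refine isBigO_norm_right.mp ?_
  simpa only [norm_pow] using
    isBigO_norm_pow_succ_of_hasFDerivAt (fun s => (hf s).hasFDerivAt) h0 h'

theorem Differentiable.hasFDerivAt_comp_const_add {f : E → F} (hf : Differentiable ℝ f) (v w : E) :
    HasFDerivAt (fun w => f (v + w)) (fderiv ℝ f (v + w)) w :=
  ((hf (v + w)).hasFDerivAt.comp w ((hasFDerivAt_id w).const_add v)).congr_fderiv (by simp)

theorem isBigO_sub_taylor_two {g : E → F} (hg : ContDiff ℝ 3 g) (v : E) :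
    (fun w => g (v + w) - g v - fderiv ℝ g v w - (2 : ℝ)⁻¹ • fderiv ℝ (fderiv ℝ g) v w w)
      =O[𝓝 0] fun w => ‖w‖ ^ 3 := by
  have hg₁ : ContDiff ℝ 2 (fderiv ℝ g) := hg.fderiv_right (by norm_num)
  have hg₂ : ContDiff ℝ 1 (fderiv ℝ (fderiv ℝ g)) := hg₁.fderiv_right (by norm_num)
  set B := fderiv ℝ (fderiv ℝ g) v
  have hsymm : IsSymmSndFDerivAt ℝ g v := hg.contDiffAt.isSymmSndFDerivAt (by simp; norm_num)
  have hsecond : (fun w => fderiv ℝ (fderiv ℝ g) (v + w) - B) =O[𝓝 0] fun w => ‖w‖ ^ 1 := by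
    have := (hg₂.differentiable one_ne_zero v).isBigO_sub.comp_tendsto
      (by simpa using (continuous_const_add v).tendsto 0)
    simp only [Function.comp_def, add_sub_cancel_left] at this
    simpa using this.norm_right
  have hfirst := isBigO_norm_pow_succ_of_hasFDerivAt
    (fun w => ((hg₁.differentiable two_ne_zero).hasFDerivAt_comp_const_add v w |>.sub_const
      (fderiv ℝ g v)).sub B.hasFDerivAt)
    (by simp) hsecond
  refine isBigO_norm_pow_succ_of_hasFDerivAt (fun w => ?_) (by simp) hfirst
  -- `w ↦ B w w` has derivative `B w + B · w`, which is `2 • B w` by symmetry of `D²g`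
  have hquad := B.hasFDerivAt_of_bilinear (hasFDerivAt_id w) (hasFDerivAt_id w)
  refine ((((hg.differentiable (by norm_num)).hasFDerivAt_comp_const_add v w).sub_const
    (g v)).sub (fderiv ℝ g v).hasFDerivAt).sub (hquad.const_smul (2 : ℝ)⁻¹) |>.congr_fderiv ?_
  ext h
  simp only [id_eq, ContinuousLinearMap.precompR_apply, ContinuousLinearMap.compL_apply,
    ContinuousLinearMap.comp_id, smul_add, sub_apply, add_apply, smul_apply,
    ContinuousLinearMap.precompL_apply, ContinuousLinearMap.id_apply, Pi.sub_apply, sub_right_inj]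
  rw [show B h w = B w h from hsymm h w]
  module

theorem isBigO_sub_taylor_two_comp {g : E → F} (hg : ContDiff ℝ 3 g) (v : E) {l : Filter α}
    {w w₀ : α → E} {r : α → ℝ} (hr : Tendsto r l (𝓝 0)) (hw₀ : w₀ =O[l] r)
    (hw : (fun x => w x - w₀ x) =O[l] fun x => r x ^ 2) :
    (fun x => g (v + w x) - g v - fderiv ℝ g v (w x)
        - (2 : ℝ)⁻¹ • fderiv ℝ (fderiv ℝ g) v (w₀ x) (w₀ x)) =O[l] fun x => r x ^ 3 := by
  set B := fderiv ℝ (fderiv ℝ g) v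
  have hr₂ : (fun x => r x ^ 2) =O[l] r := by
    simpa [pow_two] using (isBigO_refl r l).mul (hr.isBigO_one ℝ)
  have hw' : w =O[l] r := by simpa using (hw.trans hr₂).add hw₀
  have hR : (fun x => g (v + w x) - g v - fderiv ℝ g v (w x) - (2 : ℝ)⁻¹ • B (w x) (w x))
      =O[l] fun x => r x ^ 3 :=
    ((isBigO_sub_taylor_two hg v).comp_tendsto (hw'.trans_tendsto hr)).trans
      (by simpa [Function.comp_def] using hw'.norm_left.pow 3)
  have hQ : (fun x => B (w x) (w x) - B (w₀ x) (w₀ x)) =O[l] fun x => r x ^ 3 := by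
    have hleft : (fun x => B (w x - w₀ x) (w x)) =O[l] fun x => r x ^ 3 :=
      (B.isBigO_apply₂ hw hw').congr_right fun x => by ring
    have hright : (fun x => B (w₀ x) (w x - w₀ x)) =O[l] fun x => r x ^ 3 :=
      (B.isBigO_apply₂ hw₀ hw).congr_right fun x => by ring
    refine (hleft.add hright).congr_left fun x => ?_
    simp only [map_sub, sub_apply]
    abel
  refine (hR.add (hQ.const_smul_left (2 : ℝ)⁻¹)).congr_left fun x => ?_
  simp only [Pi.smul_apply, smul_sub]
  abel

theorem hasDerivAt_sum_pow_div_factorial_smul (x : ℕ → F) (k : ℕ) (τ : ℝ) :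
    HasDerivAt (fun τ : ℝ => ∑ j ∈ range (k + 1), (τ ^ j / j !) • x j)
      (∑ j ∈ range k, (τ ^ j / j !) • x (j + 1)) τ := by
  simp_rw [sum_range_succ' _ k, pow_zero, factorial_zero, cast_one, div_one, one_smul]
  refine HasDerivAt.add_const _
    (HasDerivAt.fun_sum (A := fun j (τ : ℝ) => (τ ^ (j + 1) / (j + 1)!) • x (j + 1)) fun j _ => ?_)
  convert ((hasDerivAt_pow (j + 1) τ).div_const ((j + 1)! : ℝ)).smul_const (x (j + 1)) using 2
  rw [factorial_succ]
  push_cast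
  field_simp

noncomputable def lieDeriv (N : E → E) (g : E → F) (v : E) : F := fderiv ℝ g v (N v)

theorem lieDeriv_id (N : E → E) : lieDeriv N id = N := by
  ext1 v; simp [lieDeriv]

theorem ContDiff.lieDeriv {N : E → E} {g : E → F} {k : WithTop ℕ∞} (hg : ContDiff ℝ (k + 1) g)
    (hN : ContDiff ℝ k N) : ContDiff ℝ k (lieDeriv N g) :=
  (hg.fderiv_right le_rfl).clm_apply hN

theorem lieDeriv_lieDeriv {N : E → E} {g : E → F} {v : E} (hN : DifferentiableAt ℝ N v)
    (hg : DifferentiableAt ℝ (fderiv ℝ g) v) :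
    lieDeriv N (lieDeriv N g) v
      = fderiv ℝ g v (lieDeriv N N v) + fderiv ℝ (fderiv ℝ g) v (N v) (N v) := by
  change fderiv ℝ (fun y => fderiv ℝ g y (N y)) v (N v) = _
  rw [fderiv_clm_apply hg hN]
  simp [lieDeriv]

section Flow

variable {N : E → E} {u : ℝ → E}

theorem isBigO_comp_sub_taylor_succ (hu : ∀ s, HasDerivAt u (N (u s)) s) {g : E → F}
    (hg : Differentiable ℝ g) {k : ℕ}
    (h : (fun τ => lieDeriv N g (u τ)
        - ∑ j ∈ range k, (τ ^ j / j !) • (lieDeriv N)^[j] (lieDeriv N g) (u 0)) =O[𝓝 0] (· ^ k)) :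
    (fun τ => g (u τ) - ∑ j ∈ range (k + 1), (τ ^ j / j !) • (lieDeriv N)^[j] g (u 0))
      =O[𝓝 0] (· ^ (k + 1)) := by
  refine isBigO_pow_succ_of_hasDerivAt (fun τ => ?_) (by simp [sum_range_succ']) h
  simp_rw [← Function.iterate_succ_apply]
  exact ((hg (u τ)).hasFDerivAt.comp_hasDerivAt τ (hu τ)).sub
    (hasDerivAt_sum_pow_div_factorial_smul _ k τ)

theorem isBigO_comp_sub_taylor_lieDeriv (hu : ∀ s, HasDerivAt u (N (u s)) s) {k : ℕ}
    (hN : ContDiff ℝ k N) {g : E → F} (hg : ContDiff ℝ (k + 1) g) :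
    (fun τ => g (u τ) - ∑ j ∈ range (k + 1), (τ ^ j / j !) • (lieDeriv N)^[j] g (u 0))
      =O[𝓝 0] (· ^ (k + 1)) := by
  induction k generalizing g with
  | zero =>
    refine isBigO_comp_sub_taylor_succ hu (hg.differentiable (by simp)) ?_
    have hcont : Continuous fun τ => lieDeriv N g (u τ) :=
      (hg.lieDeriv hN).continuous.comp
        (continuous_iff_continuousAt.mpr fun s => (hu s).continuousAt)
    simpa using hcont.tendsto 0 |>.isBigO_one ℝ
  | succ k ih =>
    refine isBigO_comp_sub_taylor_succ hu (hg.differentiable (by simp)) ?_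
    exact ih (hN.of_le (by simp)) (by exact_mod_cast hg.lieDeriv hN)

theorem isBigO_sub_taylor_four_of_hasDerivAt (hN : ContDiff ℝ 4 N)
    (hu : ∀ s, HasDerivAt u (N (u s)) s) (t : ℝ) :
    (fun τ => u (t + τ) - (u t + τ • N (u t) + (τ ^ 2 / 2) • lieDeriv N N (u t)
      + (τ ^ 3 / 6) • fderiv ℝ (lieDeriv N N) (u t) (N (u t))
      + (τ ^ 4 / 24) • (fderiv ℝ (lieDeriv N N) (u t) (lieDeriv N N (u t))
        + fderiv ℝ (fderiv ℝ (lieDeriv N N)) (u t) (N (u t)) (N (u t))))) =O[𝓝 0] (· ^ 5) := by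
  have := isBigO_comp_sub_taylor_lieDeriv (k := 4) (u := fun τ => u (t + τ))
    (fun s => (hu (t + s)).comp_const_add t s) hN (g := id) contDiff_id
  have hg : ContDiff ℝ 3 (lieDeriv N N) := ContDiff.lieDeriv (k := 3) hN (hN.of_le (by norm_num))
  rw [← lieDeriv_lieDeriv (hN.differentiable (by norm_num) _)
    ((hg.fderiv_right (m := 2) (by norm_num)).differentiable (by norm_num) _)]
  simp only [sum_range_succ, Function.iterate_succ_apply', Function.iterate_zero_apply,
    lieDeriv_id, factorial] at this
  norm_num at this
  exact this

end Flow

section StageCoefficients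

variable {ϑ : ℝ → ℝ}

theorem isBigO_stage_sub_half_step
    (hϑ : (fun τ => ϑ τ - 1 / 3) =O[𝓝 0] fun τ : ℝ => τ) (x y : E) :
    (fun τ => (τ / (3 * (1 - ϑ τ))) • x + (τ ^ 2 / (12 * (1 - ϑ τ))) • y - (τ / 2) • x)
      =O[𝓝 0] fun τ => τ ^ 2 := by
  have hlim := tendsto_nhds_of_isBigO_sub hϑ tendsto_id
  have hinv : (fun τ => (1 - ϑ τ)⁻¹) =O[𝓝 0] fun _ => (1 : ℝ) :=
    ((tendsto_const_nhds.sub hlim).inv₀ (by norm_num)).isBigO_one ℝ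
  have ha : (fun τ => τ / (3 * (1 - ϑ τ)) - τ / 2) =O[𝓝 0] fun τ => τ ^ 2 := by
    refine (((isBigO_refl (fun τ : ℝ => τ) _).mul hϑ).mul hinv |>.const_mul_left (1 / 2)).congr' ?_
      (by filter_upwards with τ; ring)
    filter_upwards [hlim.eventually_ne (show (1 / 3 : ℝ) ≠ 1 by norm_num)] with τ hτ
    have : 1 - ϑ τ ≠ 0 := sub_ne_zero.mpr hτ.symm
    field_simp
    ring
  have hb : (fun τ => τ ^ 2 / (12 * (1 - ϑ τ))) =O[𝓝 0] fun τ => τ ^ 2 := by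
    refine (((isBigO_refl (fun τ : ℝ => τ ^ 2) _).mul hinv).const_mul_left (1 / 12)).congr
      (fun τ => ?_) fun τ => ?_
    · rw [div_mul_eq_div_div, div_eq_mul_inv _ (1 - ϑ τ)]; ring
    · ring
  refine ((ha.smul_const x).add (hb.smul_const y)).congr_left fun τ => ?_
  simp only [sub_smul]
  abel

theorem isBigO_stage_weight
    (hϑ : (fun τ => ϑ τ - 1 / 3) =O[𝓝 0] fun τ : ℝ => τ) :
    (fun τ => (1 - ϑ τ) * τ ^ 2 / 2) =O[𝓝 0] fun τ => τ ^ 2 := by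
  have hlim := tendsto_nhds_of_isBigO_sub hϑ tendsto_id
  refine ((((tendsto_const_nhds (x := (1 : ℝ))).sub hlim).isBigO_one ℝ).mul
    (isBigO_refl (fun τ : ℝ => τ ^ 2) _) |>.const_mul_left (1 / 2)).congr (fun τ => ?_) fun τ => ?_
    <;> ring

/-- `(1-ϑ)τ²/2 · ½ · (τ/2)² - τ⁴/24`: the error in the coefficient of `D²N_t(N,N)`. -/
theorem isBigO_quadratic_defect
    (hϑ : (fun τ => ϑ τ - 1 / 3) =O[𝓝 0] fun τ : ℝ => τ) :
    (fun τ => τ ^ 4 * (1 - 3 * ϑ τ) / 48) =O[𝓝 0] fun τ => τ ^ 5 :=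
  (((isBigO_refl (fun τ : ℝ => τ ^ 4) _).mul hϑ).const_mul_left (-1 / 16)).congr
    (fun τ => by ring) fun τ => by ring

end StageCoefficients

theorem flowDeriv_eq_lieDeriv {n : ℕ} (N : (Fin n → ℝ) → Fin n → ℝ) :
    flowDeriv N = lieDeriv N N := rfl

theorem two_stage_fourth_order_accuracy_general {n : ℕ}
    (N : (Fin n → ℝ) → Fin n → ℝ) (hN : ContDiff ℝ 4 N)
    (u : ℝ → Fin n → ℝ) (hu : ∀ s, HasDerivAt u (N (u s)) s)
    (ϑ : ℝ → ℝ)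
    (hϑ : (fun τ => ϑ τ - 1 / 3) =O[nhds 0] fun τ : ℝ => τ) (t : ℝ) :
    (fun τ : ℝ =>
        (u t + τ • N (u t) + (ϑ τ * τ ^ 2 / 2) • flowDeriv N (u t)
          + ((1 - ϑ τ) * τ ^ 2 / 2) • flowDeriv N
              (u t + (τ / (3 * (1 - ϑ τ))) • N (u t)
                + (τ ^ 2 / (12 * (1 - ϑ τ))) • flowDeriv N (u t)))
          - u (t + τ))
      =O[nhds 0] fun τ => τ ^ 5 := by
  rw [flowDeriv_eq_lieDeriv]
  set g := lieDeriv N N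
  have hg : ContDiff ℝ 3 g := ContDiff.lieDeriv (k := 3) hN (hN.of_le (by norm_num))
  have hhalf : (fun τ : ℝ => (τ / 2) • N (u t)) =O[𝓝 0] fun τ => τ :=
    ((isBigO_refl (fun τ : ℝ => τ) _).const_mul_left (1 / 2) |>.congr_left
      (f₂ := fun τ => τ / 2) fun τ => by ring).smul_const (N (u t))
  have hstage := isBigO_sub_taylor_two_comp hg (u t) tendsto_id hhalf
    (isBigO_stage_sub_half_step hϑ (N (u t)) (g (u t)))
  have hne : ∀ᶠ τ in 𝓝 0, ϑ τ ≠ 1 :=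
    (tendsto_nhds_of_isBigO_sub hϑ tendsto_id).eventually_ne (by norm_num)
  have hweighted := (isBigO_stage_weight hϑ).smul hstage
  have hdefect := (isBigO_quadratic_defect hϑ).smul
    (isBigO_const_one ℝ (fderiv ℝ (fderiv ℝ g) (u t) (N (u t)) (N (u t))) (𝓝 0))
  have hexact := isBigO_sub_taylor_four_of_hasDerivAt hN hu t
  -- for `ϑ ≠ 1` the local error is exactly `hweighted + hdefect - hexact`
  refine (((hweighted.congr_right (g₂ := (· ^ 5)) fun τ => by rw [smul_eq_mul, id]; ring).add
    (hdefect.congr_right (g₂ := (· ^ 5)) fun τ => by rw [smul_eq_mul, mul_one])).sub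
    hexact).congr' ?_ EventuallyEq.rfl
  filter_upwards [hne] with τ hτ
  have : 1 - ϑ τ ≠ 0 := sub_ne_zero.mpr hτ.symm
  simp only [← add_assoc, map_add, map_smul, smul_apply, smul_add, smul_smul, smul_sub]
  match_scalars <;> field_simp <;> ring

/-- The explicit two-stage time discretization
`u* = u + τN(u)/(3(1-ϑ)) + τ²N_t(u)/(12(1-ϑ))`,
`u⁺ = u + τN(u) + (ϑτ²/2)N_t(u) + ((1-ϑ)τ²/2)N_t(u*)`, with
`ϑ = 1/3 + O(τ)` and `ϑ ≠ 1`, is fourth-order accurate: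
`u⁺ = u(t+τ) + O(τ⁵)`. -/
theorem two_stage_fourth_order_accuracy {n : ℕ}
    (N : (Fin n → ℝ) → Fin n → ℝ) (hN : ContDiff ℝ 4 N)
    (u : ℝ → Fin n → ℝ) (hu : ∀ s, HasDerivAt u (N (u s)) s)
    (ϑ : ℝ → ℝ) (hϑ1 : ∀ τ, ϑ τ ≠ 1)
    (hϑ : (fun τ => ϑ τ - 1 / 3) =O[nhds 0] fun τ : ℝ => τ) (t : ℝ) :
    (fun τ : ℝ =>
        (u t + τ • N (u t) + (ϑ τ * τ ^ 2 / 2) • flowDeriv N (u t)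
          + ((1 - ϑ τ) * τ ^ 2 / 2) • flowDeriv N
              (u t + (τ / (3 * (1 - ϑ τ))) • N (u t)
                + (τ ^ 2 / (12 * (1 - ϑ τ))) • flowDeriv N (u t)))
          - u (t + τ))
      =O[nhds 0] fun τ => τ ^ 5 :=
  two_stage_fourth_order_accuracy_general N hN u hu ϑ hϑ t
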